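/- The iterated blow-up of a single hyperedge, the 3-graph E_n defined recursively by partitioning [n] into three nearly equal parts, taking all crossing triples with one vertex in each part, and recursing inside each part, contains no pseudo-cycle minus one hyperedge of size ℓ for any ℓ ≥ 4 with 3 ∤ ℓ. -/

import Mathlib

/-- The iterated blow-up of a single hyperedge, on vertex set `{0, …, n-1}`:
partition into `V₁ = [0, n/3)`, `V₂ = [n/3, n/3 + (n+1)/3)`, `V₃` the rest
(of sizes `⌊n/3⌋`, `⌊(n+1)/3⌋`, `⌊(n+2)/3⌋`), take all crossing triples, and
recurse inside each part. -/
def iterE : ℕ → Finset (Finset ℕ)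
  | n =>
    if h : n ≤ 2 then ∅
    else
      ((Finset.range (n / 3) ×ˢ
          Finset.Ico (n / 3) (n / 3 + (n + 1) / 3) ×ˢ
          Finset.Ico (n / 3 + (n + 1) / 3) n).image
        (fun p => ({p.1, p.2.1, p.2.2} : Finset ℕ)))
      ∪ iterE (n / 3)
      ∪ (iterE ((n + 1) / 3)).image (fun e => e.image (· + n / 3))
      ∪ (iterE ((n + 2) / 3)).image (fun e => e.image (· + (n / 3 + (n + 1) / 3)))
  decreasing_by all_goals omega

/-- `H` contains a pseudo-cycle minus one hyperedge of size `ℓ`. -/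
def HasPseudoCycleMinus (H : Finset (Finset ℕ)) (ℓ : ℕ) : Prop :=
  ∃ v : ℕ → ℕ, ∀ i, i + 2 ≤ ℓ →
    ({v i, v ((i + 1) % ℓ), v ((i + 2) % ℓ)} : Finset ℕ) ∈ H

/-! Every hyperedge of `E_n` is either crossing, meeting each of the three top-level parts once,
or lies inside one part. Along a pseudo-cycle minus one hyperedge consecutive hyperedges share two
vertices, so either all of them are crossing or all lie in one common part. In the first case the
sequence of parts is 3-periodic, which is incompatible with closing up after `ℓ` steps when
`3 ∤ ℓ`; in the second case, shifting the part back to `[0, |V_i|)` gives a smaller counterexample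
inside `E_{|V_i|}`. -/

/-- For `x < n`, `part n x = k` iff `x` lies in the top-level part `V_{k+1}` of `iterE n`. -/
def part (n x : ℕ) : ℕ :=
  if x < n / 3 then 0 else if x < n / 3 + (n + 1) / 3 then 1 else 2

/-- The first vertex of part `k`; part `k` has `(n + k) / 3` vertices. -/
def partOffset (n : ℕ) : ℕ → ℕ
  | 0 => 0
  | 1 => n / 3
  | _ => n / 3 + (n + 1) / 3

lemma part_lt_three (n x : ℕ) : part n x < 3 := by
  unfold part; split_ifs <;> omega

lemma part_eq_zero {n x : ℕ} (h : x < n / 3) : part n x = 0 := if_pos h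

lemma part_eq_one {n x : ℕ} (h₁ : n / 3 ≤ x) (h₂ : x < n / 3 + (n + 1) / 3) : part n x = 1 := by
  rw [part, if_neg (by omega), if_pos h₂]

lemma part_eq_two {n x : ℕ} (h : n / 3 + (n + 1) / 3 ≤ x) : part n x = 2 := by
  rw [part, if_neg (by omega), if_neg (by omega)]

lemma iterE_of_le_two {n : ℕ} (hn : n ≤ 2) : iterE n = ∅ := by
  rw [iterE, dif_pos hn]

lemma iterE_of_two_lt {n : ℕ} (hn : 2 < n) : iterE n =
    ((Finset.range (n / 3) ×ˢ Finset.Ico (n / 3) (n / 3 + (n + 1) / 3) ×ˢ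
        Finset.Ico (n / 3 + (n + 1) / 3) n).image
      (fun p => ({p.1, p.2.1, p.2.2} : Finset ℕ)))
    ∪ iterE (n / 3)
    ∪ (iterE ((n + 1) / 3)).image (fun e => e.image (· + n / 3))
    ∪ (iterE ((n + 2) / 3)).image (fun e => e.image (· + (n / 3 + (n + 1) / 3))) := by
  rw [iterE, dif_neg (by omega)]

lemma subset_range_of_mem_iterE {n : ℕ} {e : Finset ℕ} (he : e ∈ iterE n) :
    e ⊆ Finset.range n := by
  induction n using Nat.strong_induction_on generalizing e with
  | _ n ih =>
  rcases le_or_gt n 2 with hn | hn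
  · simp [iterE_of_le_two hn] at he
  rw [iterE_of_two_lt hn] at he
  simp only [Finset.mem_union, Finset.mem_image, Finset.mem_product, Finset.mem_range,
    Finset.mem_Ico] at he
  intro x hx
  rw [Finset.mem_range]
  rcases he with (((⟨⟨a, b, c⟩, ⟨ha, hb, hc⟩, rfl⟩ | he) | ⟨e, he, rfl⟩) | ⟨e, he, rfl⟩)
  · simp only [Finset.mem_insert, Finset.mem_singleton] at ha hb hc hx
    omega
  · have := ih _ (by omega) he hx
    simp only [Finset.mem_range] at this
    omega
  all_goals
    obtain ⟨y, hy, rfl⟩ := Finset.mem_image.mp hx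
    have := ih _ (by omega) he hy
    simp only [Finset.mem_range] at this
    omega

lemma image_sub_image_add (e : Finset ℕ) (s : ℕ) :
    (e.image (· + s)).image (· - s) = e := by
  simp [Finset.image_image, Function.comp_def]

lemma crossing_or_internal_of_mem_iterE {n : ℕ} (hn : 2 < n) {e : Finset ℕ}
    (he : e ∈ iterE n) :
    (∃ a b c, part n a = 0 ∧ part n b = 1 ∧ part n c = 2 ∧ e = {a, b, c}) ∨
      ∃ k, (∀ x ∈ e, part n x = k) ∧ e.image (· - partOffset n k) ∈ iterE ((n + k) / 3) := by
  rw [iterE_of_two_lt hn] at he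
  simp only [Finset.mem_union, Finset.mem_image, Finset.mem_product, Finset.mem_range,
    Finset.mem_Ico] at he
  rcases he with (((⟨⟨a, b, c⟩, ⟨ha, hb, hc⟩, rfl⟩ | he) | ⟨e, he, rfl⟩) | ⟨e, he, rfl⟩)
  · left
    dsimp only at ha hb hc
    exact ⟨a, b, c, part_eq_zero ha, part_eq_one hb.1 hb.2, part_eq_two hc.1, rfl⟩
  all_goals right
  · refine ⟨0, fun x hx => part_eq_zero ?_, by simpa [partOffset] using he⟩
    simpa using subset_range_of_mem_iterE he hx
  · refine ⟨1, fun x hx => ?_, by simpa [partOffset, image_sub_image_add] using he⟩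
    obtain ⟨y, hy, rfl⟩ := Finset.mem_image.mp hx
    have := Finset.mem_range.mp (subset_range_of_mem_iterE he hy)
    exact part_eq_one (by omega) (by omega)
  · refine ⟨2, fun x hx => ?_, by simpa [partOffset, image_sub_image_add] using he⟩
    obtain ⟨y, hy, rfl⟩ := Finset.mem_image.mp hx
    exact part_eq_two (by omega)

lemma rainbow_or_internal_of_triple_mem_iterE {n x y z : ℕ} (hn : 2 < n)
    (he : ({x, y, z} : Finset ℕ) ∈ iterE n) :
    (part n x ≠ part n y ∧ part n x ≠ part n z ∧ part n y ≠ part n z) ∨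
      (part n y = part n x ∧ part n z = part n x ∧
        ({x - partOffset n (part n x), y - partOffset n (part n x), z - partOffset n (part n x)} :
          Finset ℕ) ∈ iterE ((n + part n x) / 3)) := by
  rcases crossing_or_internal_of_mem_iterE hn he with ⟨a, b, c, ha, hb, hc, habc⟩ | ⟨k, hk, hmem⟩
  · left
    have hparts := congrArg (Finset.image (part n)) habc
    simp only [Finset.image_insert, Finset.image_singleton, ha, hb, hc] at hparts
    have h0 : 0 ∈ ({part n x, part n y, part n z} : Finset ℕ) := hparts ▸ by simp
    have h1 : 1 ∈ ({part n x, part n y, part n z} : Finset ℕ) := hparts ▸ by simp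
    have h2 : 2 ∈ ({part n x, part n y, part n z} : Finset ℕ) := hparts ▸ by simp
    simp only [Finset.mem_insert, Finset.mem_singleton] at h0 h1 h2
    omega
  · right
    obtain ⟨rfl, hy, hz⟩ : part n x = k ∧ part n y = k ∧ part n z = k := by
      simp only [Finset.mem_insert, Finset.mem_singleton, forall_eq_or_imp, forall_eq] at hk
      exact hk
    simpa [hy, hz, Finset.image_insert] using hmem

lemma apply_eq_apply_mod_three_of_rainbow {ℓ : ℕ} {q : ℕ → ℕ} (hq : ∀ j, q j < 3)
    (h : ∀ i, i + 2 ≤ ℓ → q i ≠ q (i + 1) ∧ q i ≠ q (i + 2) ∧ q (i + 1) ≠ q (i + 2)) :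
    ∀ j ≤ ℓ, q j = q (j % 3) := by
  intro j
  induction j using Nat.strong_induction_on with
  | _ j ih =>
  intro hj
  rcases lt_or_ge j 3 with hj3 | hj3
  · rw [Nat.mod_eq_of_lt hj3]
  obtain ⟨i, rfl⟩ : ∃ i, j = i + 3 := ⟨j - 3, by omega⟩
  have h₁ := h i (by omega)
  have h₂ : q (i + 1) ≠ q (i + 2) ∧ q (i + 1) ≠ q (i + 3) ∧ q (i + 2) ≠ q (i + 3) :=
    h (i + 1) (by omega)
  have := hq i; have := hq (i + 1); have := hq (i + 2); have := hq (i + 3)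
  rw [show q (i + 3) = q i by omega, ih i (by omega) (by omega), Nat.add_mod_right]

lemma eq_apply_zero_of_rainbow_or_const {ℓ : ℕ} {q : ℕ → ℕ} (hℓ : 2 ≤ ℓ) (h3 : ¬ 3 ∣ ℓ)
    (hq : ∀ j, q j < 3) (hclosed : q ℓ = q 0)
    (h : ∀ i, i + 2 ≤ ℓ → (q i ≠ q (i + 1) ∧ q i ≠ q (i + 2) ∧ q (i + 1) ≠ q (i + 2)) ∨
      (q (i + 1) = q i ∧ q (i + 2) = q i)) :
    ∀ j ≤ ℓ, q j = q 0 := by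
  have step i (hi : i + 3 ≤ ℓ) :
      (q (i + 1) ≠ q (i + 2) ∧ q (i + 1) ≠ q (i + 3) ∧ q (i + 2) ≠ q (i + 3)) ∨
        (q (i + 2) = q (i + 1) ∧ q (i + 3) = q (i + 1)) :=
    h (i + 1) hi
  rcases h 0 (by omega) with h0 | h0 <;> simp only [zero_add] at h0
  · have rainbow : ∀ i, i + 2 ≤ ℓ → q i ≠ q (i + 1) ∧ q i ≠ q (i + 2) ∧ q (i + 1) ≠ q (i + 2) := by
      intro i
      induction i with
      | zero => exact fun _ => h0
      | succ i ih =>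
        intro hi
        exact (step i hi).resolve_right fun hc => (ih (by omega)).2.2 hc.1.symm
    have hend := apply_eq_apply_mod_three_of_rainbow hq rainbow ℓ le_rfl
    exfalso
    rcases (by omega : ℓ % 3 = 1 ∨ ℓ % 3 = 2) with hr | hr <;> rw [hr] at hend <;> omega
  · have const : ∀ i, i + 2 ≤ ℓ → q (i + 1) = q 0 ∧ q (i + 2) = q 0 := by
      intro i
      induction i with
      | zero => exact fun _ => h0
      | succ i ih =>
        intro hi
        obtain ⟨h₁, h₂⟩ := ih (by omega)
        have hc := (step i hi).resolve_left fun hr => hr.1 (h₁.trans h₂.symm)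
        exact ⟨h₂, hc.2.trans h₁⟩
    intro j hj
    rcases j with _ | j
    · rfl
    rcases (by omega : j + 1 = ℓ ∨ j + 2 ≤ ℓ) with rfl | hj
    · exact hclosed
    · exact (const j hj).1

lemma not_forall_mem_iterE_of_closed {ℓ : ℕ} (hℓ : 2 ≤ ℓ) (h3 : ¬ 3 ∣ ℓ) (n : ℕ) (w : ℕ → ℕ)
    (hw : w ℓ = w 0) :
    ¬ ∀ i, i + 2 ≤ ℓ → ({w i, w (i + 1), w (i + 2)} : Finset ℕ) ∈ iterE n := by
  induction n using Nat.strong_induction_on generalizing w with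
  | _ n ih =>
  intro hedge
  have hn : 2 < n := by
    by_contra! hn
    simpa [iterE_of_le_two hn] using hedge 0 hℓ
  have htype i (hi : i + 2 ≤ ℓ) := rainbow_or_internal_of_triple_mem_iterE hn (hedge i hi)
  have hconst : ∀ j ≤ ℓ, part n (w j) = part n (w 0) :=
    eq_apply_zero_of_rainbow_or_const hℓ h3 (fun j => part_lt_three n (w j)) (by rw [hw])
      fun i hi => (htype i hi).imp_right fun hc => ⟨hc.1, hc.2.1⟩
  have hk := part_lt_three n (w 0)
  refine ih ((n + part n (w 0)) / 3) (by omega) (fun j => w j - partOffset n (part n (w 0)))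
    (by rw [hw]) fun i hi => ?_
  rcases htype i hi with hr | ⟨-, -, hmem⟩
  · exact absurd ((hconst i (by omega)).trans (hconst (i + 1) (by omega)).symm) hr.1
  · rwa [hconst i (by omega)] at hmem

lemma HasPseudoCycleMinus.exists_closed {H : Finset (Finset ℕ)} {ℓ : ℕ}
    (h : HasPseudoCycleMinus H ℓ) :
    ∃ w : ℕ → ℕ, w ℓ = w 0 ∧ ∀ i, i + 2 ≤ ℓ → ({w i, w (i + 1), w (i + 2)} : Finset ℕ) ∈ H := by
  obtain ⟨v, hv⟩ := h
  refine ⟨fun j => v (j % ℓ), by simp, fun i hi => ?_⟩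
  simpa [Nat.mod_eq_of_lt (by omega : i < ℓ)] using hv i hi

/-- The iterated blow-up of a hyperedge contains no pseudo-cycle minus one
hyperedge of size `ℓ`, for any `ℓ ≥ 4` with `3 ∤ ℓ`. -/
theorem stmt9 (n ℓ : ℕ) (hℓ : 4 ≤ ℓ) (h3 : ¬ 3 ∣ ℓ) :
    ¬ HasPseudoCycleMinus (iterE n) ℓ := by
  intro h
  obtain ⟨w, hw, hedges⟩ := h.exists_closed
  exact not_forall_mem_iterE_of_closed (by omega) h3 n w hw hedges
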